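/- arXiv:2004.02685 — 2 statements merged into one kernel-verified Lean document; each statement's English description precedes it below -/
import Mathlib

section
/- Electric energy variation identity: if C_0, C_1 are C¹ functions on [0,∞) × ℝ, L-periodic in x, satisfying the continuity equation ∂_t C_0 + v_th ∂_x C_1 = 0, and Φ is a C² function on [0,∞) × ℝ, L-periodic in x, with E := −∂_x Φ satisfying the Poisson equation ∂_x E = v_th C_0 − ρ0, then for all t ≥ 0: (1/2) · d/dt ∫_0^L E(t,x)² dx = −v_th² ∫_0^L C_1(t,x) E(t,x) dx. -/
/-!
Integrating Poisson's equation in `x` gives `E(s,x) - E(s,0) = ∫_0^x (v_th C_0 - ρ0)`;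
differentiating in `s` under the integral and using the continuity equation yields Ampère's law
`∂_t E = -v_th² C_1 + c(t)` with `c` independent of `x`. Hence
`(1/2) d/dt ∫_0^L E² = ∫_0^L E ∂_t E = -v_th² ∫_0^L C_1 E + c(t) ∫_0^L E`,
and the last integral is `Φ(t,0) - Φ(t,L) = 0` by periodicity of the potential.
-/

open MeasureTheory intervalIntegral Function

section Uncurry

variable {F : Type*} [NormedAddCommGroup F] [NormedSpace ℝ F] {f : ℝ → ℝ → F}

theorem ContDiff.uncurry_left {n : WithTop ℕ∞} (t : ℝ) (hf : ContDiff ℝ n (uncurry f)) :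
    ContDiff ℝ n (f t) :=
  hf.comp (contDiff_const.prodMk contDiff_id)

theorem ContDiff.uncurry_right {n : WithTop ℕ∞} (x : ℝ) (hf : ContDiff ℝ n (uncurry f)) :
    ContDiff ℝ n fun s => f s x :=
  hf.comp (contDiff_id.prodMk contDiff_const)

theorem HasFDerivAt.hasDerivAt_uncurry_fst {f' : ℝ × ℝ →L[ℝ] F} {t x : ℝ}
    (hf : HasFDerivAt (uncurry f) f' (t, x)) : HasDerivAt (fun s => f s x) (f' (1, 0)) t :=
  hf.comp_hasDerivAt (f := fun s => (s, x)) t ((hasDerivAt_id' t).prodMk (hasDerivAt_const t x))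

theorem HasFDerivAt.hasDerivAt_uncurry_snd {f' : ℝ × ℝ →L[ℝ] F} {t x : ℝ}
    (hf : HasFDerivAt (uncurry f) f' (t, x)) : HasDerivAt (f t) (f' (0, 1)) x :=
  hf.comp_hasDerivAt (f := fun y => (t, y)) x ((hasDerivAt_const x t).prodMk (hasDerivAt_id' x))

variable {m n : WithTop ℕ∞}

theorem ContDiff.contDiff_deriv_fst (hf : ContDiff ℝ n (uncurry f)) (hmn : m + 1 ≤ n) :
    ContDiff ℝ m fun p : ℝ × ℝ => deriv (fun s => f s p.2) p.1 := by
  have hdiff := hf.differentiable (zero_lt_one.trans_le (le_add_self.trans hmn)).ne'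
  have hderiv : (fun p : ℝ × ℝ => deriv (fun s => f s p.2) p.1) =
      fun p => fderiv ℝ (uncurry f) p (1, 0) :=
    funext fun p => (hdiff p).hasFDerivAt.hasDerivAt_uncurry_fst.deriv
  rw [hderiv]
  exact (hf.fderiv_right hmn).clm_apply contDiff_const

theorem ContDiff.contDiff_deriv_snd (hf : ContDiff ℝ n (uncurry f)) (hmn : m + 1 ≤ n) :
    ContDiff ℝ m fun p : ℝ × ℝ => deriv (f p.1) p.2 := by
  have hdiff := hf.differentiable (zero_lt_one.trans_le (le_add_self.trans hmn)).ne'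
  have hderiv : (fun p : ℝ × ℝ => deriv (f p.1) p.2) =
      fun p => fderiv ℝ (uncurry f) p (0, 1) :=
    funext fun p => (hdiff p).hasFDerivAt.hasDerivAt_uncurry_snd.deriv
  rw [hderiv]
  exact (hf.fderiv_right hmn).clm_apply contDiff_const

theorem hasDerivAt_intervalIntegral_of_contDiff (hf : ContDiff ℝ 1 (uncurry f)) (a b t : ℝ) :
    HasDerivAt (fun s => ∫ x in a..b, f s x) (∫ x in a..b, deriv (fun s => f s x) t) t := by
  have hcont : Continuous (uncurry f) := hf.continuous
  have hcont' : Continuous fun p : ℝ × ℝ => deriv (fun s => f s p.2) p.1 :=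
    (hf.contDiff_deriv_fst (m := 0) le_rfl).continuous
  obtain ⟨C, hC⟩ := (isCompact_Icc.prod isCompact_uIcc : IsCompact (Set.Icc (t - 1) (t + 1) ×ˢ
    Set.uIcc a b)).exists_bound_of_continuousOn hcont'.continuousOn
  refine (hasDerivAt_integral_of_dominated_loc_of_deriv_le (F := f)
    (F' := fun s x => deriv (fun s => f s x) s) (bound := fun _ => C)
    (Metric.ball_mem_nhds t one_pos)
    (.of_forall fun s => (hcont.uncurry_left s).aestronglyMeasurable)
    ((hcont.uncurry_left t).intervalIntegrable a b)
    (hcont'.comp (continuous_const.prodMk continuous_id)).aestronglyMeasurable ?_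
    intervalIntegrable_const ?_).2
  · refine .of_forall fun x hx s hs => hC (s, x) ⟨?_, Set.uIoc_subset_uIcc hx⟩
    rw [Metric.mem_ball, Real.dist_eq, abs_lt] at hs
    constructor <;> linarith
  · exact .of_forall fun x _ s _ =>
      ((hf.uncurry_right x).differentiable one_ne_zero s).hasDerivAt

theorem deriv_fst_sub_eq_intervalIntegral [CompleteSpace F] {g : ℝ → ℝ → F}
    (hf : ContDiff ℝ 1 (uncurry f)) (hg : ContDiff ℝ 1 (uncurry g))
    (hfg : ∀ s x, deriv (f s) x = g s x) (t a b : ℝ) :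
    deriv (fun s => f s b) t - deriv (fun s => f s a) t =
      ∫ x in a..b, deriv (fun s => g s x) t := by
  have hftc : (fun s => ∫ x in a..b, g s x) = fun s => f s b - f s a :=
    funext fun s => integral_deriv_eq_sub' (f s) (funext (hfg s))
      (fun x _ => (hf.uncurry_left s).differentiable one_ne_zero x)
      (hg.uncurry_left s).continuous.continuousOn
  have hdiff s x : DifferentiableAt ℝ (fun s => f s x) s :=
    (hf.uncurry_right x).differentiable one_ne_zero s
  have := hasDerivAt_intervalIntegral_of_contDiff hg a b t
  rw [hftc] at this
  exact ((hdiff t b).hasDerivAt.sub (hdiff t a).hasDerivAt).unique this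

end Uncurry

theorem Function.Periodic.intervalIntegral_deriv_eq_zero {F : Type*} [NormedAddCommGroup F]
    [NormedSpace ℝ F] [CompleteSpace F] {g : ℝ → F} {c : ℝ} (hg : ContDiff ℝ 1 g)
    (hper : Periodic g c)
    (a : ℝ) : ∫ x in a..a + c, deriv g x = 0 := by
  rw [integral_deriv_eq_sub (fun x _ => hg.differentiable one_ne_zero x)
    ((hg.continuous_deriv le_rfl).intervalIntegrable _ _), hper a, sub_self]

theorem hasDerivAt_intervalIntegral_sq {f : ℝ → ℝ → ℝ} (hf : ContDiff ℝ 1 (uncurry f))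
    (a b t : ℝ) : HasDerivAt (fun s => ∫ x in a..b, f s x ^ 2)
      (∫ x in a..b, 2 * f t x * deriv (fun s => f s x) t) t := by
  have := hasDerivAt_intervalIntegral_of_contDiff (f := fun s x => f s x ^ 2) (hf.pow 2) a b t
  refine this.congr_deriv (intervalIntegral.integral_congr fun x _ => ?_)
  have hdiff : DifferentiableAt ℝ (fun s => f s x) t :=
    (hf.uncurry_right x).differentiable one_ne_zero t
  rw [deriv_fun_pow hdiff]
  norm_num

theorem deriv_fst_add_eq_of_continuity_of_poisson {vth ρ0 : ℝ} {C0 C1 E : ℝ → ℝ → ℝ}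
    (hC0 : ContDiff ℝ 1 (uncurry C0)) (hC1 : ContDiff ℝ 1 (uncurry C1))
    (hE : ContDiff ℝ 1 (uncurry E))
    (hcont : ∀ t x, deriv (fun s => C0 s x) t + vth * deriv (C1 t) x = 0)
    (hPoisson : ∀ t x, deriv (E t) x = vth * C0 t x - ρ0) (t a b : ℝ) :
    deriv (fun s => E s b) t + vth ^ 2 * C1 t b = deriv (fun s => E s a) t + vth ^ 2 * C1 t a := by
  have hG : ContDiff ℝ 1 (uncurry fun t x => vth * C0 t x - ρ0) :=
    (contDiff_const.mul hC0).sub contDiff_const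
  have hGt x : deriv (fun s => vth * C0 s x - ρ0) t = -vth ^ 2 * deriv (C1 t) x := by
    rw [deriv_sub_const, deriv_const_mul _ ((hC0.uncurry_right x).differentiable one_ne_zero t)]
    linear_combination vth * hcont t x
  have hC1x : ∫ x in a..b, deriv (C1 t) x = C1 t b - C1 t a :=
    integral_deriv_eq_sub (fun x _ => (hC1.uncurry_left t).differentiable one_ne_zero x)
      ((hC1.uncurry_left t).continuous_deriv le_rfl |>.intervalIntegrable a b)
  have := deriv_fst_sub_eq_intervalIntegral hE hG hPoisson t a b
  simp only [hGt, intervalIntegral.integral_const_mul, hC1x] at this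
  linear_combination this

theorem electric_energy_variation_general
    (L vth ρ0 : ℝ)
    (C0 C1 : ℝ → ℝ → ℝ) (Φ E : ℝ → ℝ → ℝ)
    -- regularity: `C_0`, `C_1` are C¹ in (t,x), `Φ` is C²
    (hC0 : ContDiff ℝ 1 (fun p : ℝ × ℝ => C0 p.1 p.2))
    (hC1 : ContDiff ℝ 1 (fun p : ℝ × ℝ => C1 p.1 p.2))
    (hΦ : ContDiff ℝ 2 (fun p : ℝ × ℝ => Φ p.1 p.2))
    -- L-periodicity in space
    (hΦper : ∀ t, Function.Periodic (fun x => Φ t x) L)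
    -- the electric field `E := −∂_x Φ`
    (hE : ∀ t x, E t x = -deriv (fun y => Φ t y) x)
    -- the continuity equation
    (hcont : ∀ t x,
      deriv (fun s => C0 s x) t + vth * deriv (fun y => C1 t y) x = 0)
    -- the Poisson equation
    (hPoisson : ∀ t x, deriv (fun y => E t y) x = vth * C0 t x - ρ0) :
    ∀ t, 0 ≤ t →
      (1 / 2) * deriv (fun s => ∫ x in (0:ℝ)..L, (E s x) ^ 2) t
        = -(vth ^ 2) * ∫ x in (0:ℝ)..L, C1 t x * E t x := by
  intro t _
  have hE1 : ContDiff ℝ 1 (uncurry E) := by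
    have : uncurry E = fun p => -deriv (Φ p.1) p.2 := funext fun p => hE p.1 p.2
    rw [this]
    exact (hΦ.contDiff_deriv_snd (by norm_num)).neg
  have hmean : ∫ x in (0:ℝ)..L, E t x = 0 := by
    simp only [hE, intervalIntegral.integral_neg, neg_eq_zero]
    simpa using (hΦper t).intervalIntegral_deriv_eq_zero ((hΦ.uncurry_left t).of_le one_le_two) 0
  have hEt x := deriv_fst_add_eq_of_continuity_of_poisson hC0 hC1 hE1 hcont hPoisson t 0 x
  have hEc : Continuous (E t) := (hE1.uncurry_left t).continuous
  have hC1Ec : Continuous fun x => C1 t x * E t x := (hC1.uncurry_left t).continuous.mul hEc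
  rw [(hasDerivAt_intervalIntegral_sq hE1 0 L t).deriv]
  calc (1 / 2) * ∫ x in (0:ℝ)..L, 2 * E t x * deriv (fun s => E s x) t
      = ∫ x in (0:ℝ)..L, (-vth ^ 2 * (C1 t x * E t x)
          + (deriv (fun s => E s 0) t + vth ^ 2 * C1 t 0) * E t x) := by
        rw [← intervalIntegral.integral_const_mul]
        refine intervalIntegral.integral_congr fun x _ => ?_
        linear_combination E t x * hEt x
    _ = -vth ^ 2 * ∫ x in (0:ℝ)..L, C1 t x * E t x := by
        rw [intervalIntegral.integral_add (hC1Ec.const_mul _ |>.intervalIntegrable 0 L)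
          (hEc.const_mul _ |>.intervalIntegrable 0 L), intervalIntegral.integral_const_mul,
          intervalIntegral.integral_const_mul, hmean, mul_zero, add_zero]

/-- Electric energy variation identity: if `∂_t C_0 + v_th ∂_x C_1 = 0` and
`E = −∂_x Φ` satisfies the Poisson equation `∂_x E = v_th C_0 − ρ0`, then
`(1/2) d/dt ∫_0^L E² dx = −v_th² ∫_0^L C_1 E dx`. -/
theorem electric_energy_variation
    (L vth ρ0 : ℝ) (hL : 0 < L) (hvth : 0 < vth)
    (C0 C1 : ℝ → ℝ → ℝ) (Φ E : ℝ → ℝ → ℝ)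
    -- regularity: `C_0`, `C_1` are C¹ in (t,x), `Φ` is C²
    (hC0 : ContDiff ℝ 1 (fun p : ℝ × ℝ => C0 p.1 p.2))
    (hC1 : ContDiff ℝ 1 (fun p : ℝ × ℝ => C1 p.1 p.2))
    (hΦ : ContDiff ℝ 2 (fun p : ℝ × ℝ => Φ p.1 p.2))
    -- L-periodicity in space
    (hC0per : ∀ t, Function.Periodic (fun x => C0 t x) L)
    (hC1per : ∀ t, Function.Periodic (fun x => C1 t x) L)
    (hΦper : ∀ t, Function.Periodic (fun x => Φ t x) L)
    -- the electric field `E := −∂_x Φ`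
    (hE : ∀ t x, E t x = -deriv (fun y => Φ t y) x)
    -- the continuity equation
    (hcont : ∀ t x,
      deriv (fun s => C0 s x) t + vth * deriv (fun y => C1 t y) x = 0)
    -- the Poisson equation
    (hPoisson : ∀ t x, deriv (fun y => E t y) x = vth * C0 t x - ρ0) :
    ∀ t, 0 ≤ t →
      (1 / 2) * deriv (fun s => ∫ x in (0:ℝ)..L, (E s x) ^ 2) t
        = -(vth ^ 2) * ∫ x in (0:ℝ)..L, C1 t x * E t x :=
  electric_energy_variation_general L vth ρ0 C0 C1 Φ E hC0 hC1 hΦ hΦper hE hcont hPoisson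
end

section
/- Conservation of discrete total energy for the modified semi-discrete discontinuous Galerkin scheme: if (C_0,…,C_{N_H−1}, E, Φ) solves the semi-discrete DG scheme with the DG Poisson solver, then the discrete total energy ℰ_h(t) := (1/2) ∫_0^L [ v_th³ (√2 · C_2(t,x) + C_0(t,x)) + E(t,x)² ] dx + (β/2) Σ_{j=1}^{N_x} ([Φ(t,·)]_{j−1/2})² is constant in t. -/
/-!
Differentiate the energy in time. Testing the `n = 0` equation with `φ = 1` conserves the
mass `∫ C₀` (the fluxes `ĝ₀` telescope on the periodic mesh), and testing the `n = 2` equation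
with `φ = 1` gives `d/dt ∫ C₂ = (√2 / v_th) (∫ E C₁ + Σ ({C₁} − Ĉ₁)[Φ])`, the interface sum
coming from the residual `r₂`. For the field energy, the first Poisson equation tested with
`∂ₜE` and with `C₁`, the time derivative of the second one and the `n = 0` equation (both
tested with `Φ`) turn `∫ E ∂ₜE + v_th² ∫ E C₁` into a telescoping sum of interface fluxes,
and by the choice of `Ê` and `Ĉ₁` the flux jumps by `−β[∂ₜΦ][Φ] − v_th² ({C₁} − Ĉ₁)[Φ]`
across each interface. All contributions cancel. On each cell `∂ₜE` is again a polynomial of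
degree `≤ k`, hence an admissible test function.
-/

open MeasureTheory Finset

noncomputable section

/-- Left (minus) one-sided limit of the piecewise polynomial with cell
polynomials `u 0, …, u (Nx−1)` at the interface `x_{i+1/2} = X i`
(interfaces `i = 0` and `i = Nx` are identified periodically). -/
def dgMinus (Nx : ℕ) (X : ℕ → ℝ) (u : ℕ → Polynomial ℝ) (i : ℕ) : ℝ :=
  if i = 0 then (u (Nx - 1)).eval (X Nx) else (u (i - 1)).eval (X i)

/-- Right (plus) one-sided limit at the interface `X i` (periodic). -/
def dgPlus (Nx : ℕ) (X : ℕ → ℝ) (u : ℕ → Polynomial ℝ) (i : ℕ) : ℝ :=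
  if i = Nx then (u 0).eval (X 0) else (u i).eval (X i)

/-- Jump `[u] = u⁺ − u⁻` at the interface `X i`. -/
def dgJump (Nx : ℕ) (X : ℕ → ℝ) (u : ℕ → Polynomial ℝ) (i : ℕ) : ℝ :=
  dgPlus Nx X u i - dgMinus Nx X u i

/-- Average `{u} = (u⁺ + u⁻)/2` at the interface `X i`. -/
def dgAvg (Nx : ℕ) (X : ℕ → ℝ) (u : ℕ → Polynomial ℝ) (i : ℕ) : ℝ :=
  (dgPlus Nx X u i + dgMinus Nx X u i) / 2

/-- Integral over the cell `I_j = (X j, X (j+1))`. -/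
def cellInt (X : ℕ → ℝ) (j : ℕ) (f : ℝ → ℝ) : ℝ :=
  ∫ x in (X j)..(X (j + 1)), f x

/-- `g_n = v_th (√(n+1) C_{n+1} + √n C_{n−1})` on each cell (the convention
`C_{−1} = 0` is handled by `√0 = 0` and truncated subtraction). -/
def dgG (vth : ℝ) (Cf : ℕ → ℕ → Polynomial ℝ) (n j : ℕ) : Polynomial ℝ :=
  vth • (Real.sqrt (n + 1) • Cf (n + 1) j + Real.sqrt n • Cf (n - 1) j)

/-- Global Lax–Friedrichs flux
`ĝ_n = (1/2)(g_n⁻ + g_n⁺ − α (C_n⁺ − C_n⁻))` with `α = v_th √N_H`. -/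
def dgGhat (vth : ℝ) (NH Nx : ℕ) (X : ℕ → ℝ) (Cf : ℕ → ℕ → Polynomial ℝ)
    (n i : ℕ) : ℝ :=
  (1 / 2) * (dgMinus Nx X (dgG vth Cf n) i + dgPlus Nx X (dgG vth Cf n) i
    - vth * Real.sqrt NH *
        (dgPlus Nx X (Cf n) i - dgMinus Nx X (Cf n) i))

/-- `Ĉ_1 = ĝ_0 / v_th`. -/
def dgC1hat (vth : ℝ) (NH Nx : ℕ) (X : ℕ → ℝ) (Cf : ℕ → ℕ → Polynomial ℝ)
    (i : ℕ) : ℝ :=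
  dgGhat vth NH Nx X Cf 0 i / vth

/-- The convective DG form
`a_n^j(g_n, φ) = −∫_{I_j} g_n φ' + ĝ_{n,j+1/2} φ(x_{j+1/2}⁻) − ĝ_{n,j−1/2} φ(x_{j−1/2}⁺)`. -/
def dgA (vth : ℝ) (NH Nx : ℕ) (X : ℕ → ℝ) (Cf : ℕ → ℕ → Polynomial ℝ)
    (n j : ℕ) (φ : Polynomial ℝ) : ℝ :=
  -(cellInt X j fun x => (dgG vth Cf n j).eval x * φ.derivative.eval x)
    + dgGhat vth NH Nx X Cf n (j + 1) * φ.eval (X (j + 1))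
    - dgGhat vth NH Nx X Cf n j * φ.eval (X j)

/-- The residual `⟨r_1^j, φ⟩`. -/
def dgR1 (vth β : ℝ) (Nx : ℕ) (X : ℕ → ℝ) (Ef Φf : ℕ → Polynomial ℝ)
    (j : ℕ) (φ : Polynomial ℝ) : ℝ :=
  -(β / (2 * vth ^ 2)) *
    ((dgJump Nx X Φf j * dgJump Nx X Ef j) * φ.eval (X j)
      + (dgJump Nx X Φf (j + 1) * dgJump Nx X Ef (j + 1)) * φ.eval (X (j + 1)))

/-- The residual `⟨r_2^j, φ⟩`. -/
def dgR2 (vth : ℝ) (NH Nx : ℕ) (X : ℕ → ℝ) (Cf : ℕ → ℕ → Polynomial ℝ)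
    (Φf : ℕ → Polynomial ℝ) (j : ℕ) (φ : Polynomial ℝ) : ℝ :=
  (1 / (Real.sqrt 2 * vth)) *
    ((dgAvg Nx X (Cf 1) j - dgC1hat vth NH Nx X Cf j) * dgJump Nx X Φf j *
        φ.eval (X j)
      + (dgAvg Nx X (Cf 1) (j + 1) - dgC1hat vth NH Nx X Cf (j + 1)) *
          dgJump Nx X Φf (j + 1) * φ.eval (X (j + 1)))

/-- The residual `⟨r_n^j, φ⟩` (zero for `n ∉ {1, 2}`). -/
def dgR (vth β : ℝ) (NH Nx : ℕ) (X : ℕ → ℝ) (Cf : ℕ → ℕ → Polynomial ℝ)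
    (Ef Φf : ℕ → Polynomial ℝ) (n j : ℕ) (φ : Polynomial ℝ) : ℝ :=
  if n = 1 then dgR1 vth β Nx X Ef Φf j φ
  else if n = 2 then dgR2 vth NH Nx X Cf Φf j φ
  else 0

/-- The source form `b_n^j(C, E, Φ, φ) = −(√n/v_th) ∫_{I_j} E C_{n−1} φ − ⟨r_n^j, φ⟩`
(for `n = 0` this is `0` since `√0 = 0` and `r_0 = 0`). -/
def dgB (vth β : ℝ) (NH Nx : ℕ) (X : ℕ → ℝ) (Cf : ℕ → ℕ → Polynomial ℝ)
    (Ef Φf : ℕ → Polynomial ℝ) (n j : ℕ) (φ : Polynomial ℝ) : ℝ :=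
  -(Real.sqrt n / vth) *
      (cellInt X j fun x => (Ef j).eval x * (Cf (n - 1) j).eval x * φ.eval x)
    - dgR vth β NH Nx X Cf Ef Φf n j φ

/-- The local DG scheme for the Poisson equation with source `C_0`, with
fluxes `Φ̂ = {Φ}` and `Ê = {E} − β [Φ]`. -/
def dgPoisson (vth ρ0 β : ℝ) (k Nx : ℕ) (X : ℕ → ℝ)
    (C0f Ef Φf : ℕ → Polynomial ℝ) : Prop :=
  ∀ j < Nx, ∀ ψ : Polynomial ℝ, ψ.natDegree ≤ k →
    ((cellInt X j fun x => (Φf j).eval x * ψ.derivative.eval x)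
        - dgAvg Nx X Φf (j + 1) * ψ.eval (X (j + 1))
        + dgAvg Nx X Φf j * ψ.eval (X j)
      = cellInt X j fun x => (Ef j).eval x * ψ.eval x)
    ∧ (-(cellInt X j fun x => (Ef j).eval x * ψ.derivative.eval x)
        + (dgAvg Nx X Ef (j + 1) - β * dgJump Nx X Φf (j + 1)) *
            ψ.eval (X (j + 1))
        - (dgAvg Nx X Ef j - β * dgJump Nx X Φf j) * ψ.eval (X j)
      = cellInt X j fun x => (vth * (C0f j).eval x - ρ0) * ψ.eval x)

/-- `∫_0^L u dx` for a piecewise polynomial `u`. -/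
def dgTotInt (Nx : ℕ) (X : ℕ → ℝ) (u : ℕ → Polynomial ℝ) : ℝ :=
  ∑ j ∈ Finset.range Nx, cellInt X j fun x => (u j).eval x

/-- The discrete total energy
`ℰ_h = (1/2) ∫_0^L [v_th³(√2 C_2 + C_0) + E²] dx + (β/2) Σ_j [Φ]_{j−1/2}²`. -/
def dgEnergy (vth β : ℝ) (Nx : ℕ) (X : ℕ → ℝ) (Cf : ℕ → ℕ → Polynomial ℝ)
    (Ef Φf : ℕ → Polynomial ℝ) : ℝ :=
  (1 / 2) * ∑ j ∈ Finset.range Nx,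
      (cellInt X j fun x =>
        vth ^ 3 * (Real.sqrt 2 * (Cf 2 j).eval x + (Cf 0 j).eval x)
          + ((Ef j).eval x) ^ 2)
    + (β / 2) * ∑ j ∈ Finset.range Nx, (dgJump Nx X Φf j) ^ 2

end

open Polynomial

noncomputable section

section PolynomialCurve

abbrev natLagrangeBasis (k : ℕ) : ℕ → ℝ[X] :=
  Lagrange.basis (range (k + 1)) (Nat.cast : ℕ → ℝ)

-- A curve of polynomials of degree `≤ k` is determined by its values at the nodes `0, …, k`,
-- so its time derivative is the interpolant of the nodal derivatives.
def polyCurveDeriv (k : ℕ) (u : ℝ → ℝ[X]) (t : ℝ) : ℝ[X] :=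
  Lagrange.interpolate (range (k + 1)) (Nat.cast : ℕ → ℝ)
    fun m => deriv (fun s => (u s).eval (m : ℝ)) t

variable {k : ℕ} {u w : ℝ → ℝ[X]} {t : ℝ}

lemma injOn_natCast_range (k : ℕ) : Set.InjOn (Nat.cast : ℕ → ℝ) (range (k + 1)) :=
  Nat.cast_injective.injOn

lemma eq_sum_eval_smul_natLagrangeBasis {p : ℝ[X]} (hp : p.natDegree ≤ k) :
    p = ∑ m ∈ range (k + 1), p.eval (m : ℝ) • natLagrangeBasis k m := by
  have hdeg : p.degree < #(range (k + 1)) := by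
    rw [card_range]
    exact p.degree_le_natDegree.trans_lt (by exact_mod_cast Nat.lt_succ_of_le hp)
  conv_lhs => rw [Lagrange.eq_interpolate (injOn_natCast_range k) hdeg]
  simp only [Lagrange.interpolate_apply, C_mul']

lemma polyCurveDeriv_eq_sum (k : ℕ) (u : ℝ → ℝ[X]) (t : ℝ) :
    polyCurveDeriv k u t
      = ∑ m ∈ range (k + 1), deriv (fun s => (u s).eval (m : ℝ)) t • natLagrangeBasis k m := by
  simp only [polyCurveDeriv, Lagrange.interpolate_apply, C_mul']

lemma natDegree_polyCurveDeriv_le (k : ℕ) (u : ℝ → ℝ[X]) (t : ℝ) :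
    (polyCurveDeriv k u t).natDegree ≤ k := by
  have h : (polyCurveDeriv k u t).degree < #(range (k + 1)) :=
    Lagrange.degree_interpolate_lt _ (injOn_natCast_range k)
  rw [card_range] at h
  exact natDegree_le_iff_degree_le.mpr (Order.le_of_lt_succ h)

lemma hasDerivAt_linearMap_polyCurveDeriv (ℓ : ℝ[X] →ₗ[ℝ] ℝ) (hdeg : ∀ s, (u s).natDegree ≤ k)
    (hdiff : ∀ x, DifferentiableAt ℝ (fun s => (u s).eval x) t) :
    HasDerivAt (fun s => ℓ (u s)) (ℓ (polyCurveDeriv k u t)) t := by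
  have hexp : (fun s => ℓ (u s))
      = fun s => ∑ m ∈ range (k + 1), (u s).eval (m : ℝ) * ℓ (natLagrangeBasis k m) := by
    funext s
    conv_lhs => rw [eq_sum_eval_smul_natLagrangeBasis (hdeg s)]
    simp only [map_sum, map_smul, smul_eq_mul]
  rw [hexp, polyCurveDeriv_eq_sum]
  simp only [map_sum, map_smul, smul_eq_mul]
  exact HasDerivAt.fun_sum fun m _ => (hdiff m).hasDerivAt.mul_const _

lemma hasDerivAt_eval_polyCurveDeriv (hdeg : ∀ s, (u s).natDegree ≤ k)
    (hdiff : ∀ x, DifferentiableAt ℝ (fun s => (u s).eval x) t) (x : ℝ) :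
    HasDerivAt (fun s => (u s).eval x) ((polyCurveDeriv k u t).eval x) t :=
  hasDerivAt_linearMap_polyCurveDeriv (leval x) hdeg hdiff

lemma hasDerivAt_bilin_polyCurveDeriv (B : ℝ[X] →ₗ[ℝ] ℝ[X] →ₗ[ℝ] ℝ)
    (hudeg : ∀ s, (u s).natDegree ≤ k)
    (hudiff : ∀ x, DifferentiableAt ℝ (fun s => (u s).eval x) t)
    (hwdeg : ∀ s, (w s).natDegree ≤ k)
    (hwdiff : ∀ x, DifferentiableAt ℝ (fun s => (w s).eval x) t) :
    HasDerivAt (fun s => B (u s) (w s))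
      (B (polyCurveDeriv k u t) (w t) + B (u t) (polyCurveDeriv k w t)) t := by
  have hexp : (fun s => B (u s) (w s))
      = fun s => ∑ n ∈ range (k + 1), (w s).eval (n : ℝ) * B.flip (natLagrangeBasis k n) (u s) := by
    funext s
    conv_lhs => rw [eq_sum_eval_smul_natLagrangeBasis (hwdeg s)]
    simp only [map_sum, map_smul, smul_eq_mul, LinearMap.flip_apply]
  have hval : B (polyCurveDeriv k u t) (w t) + B (u t) (polyCurveDeriv k w t)
      = ∑ n ∈ range (k + 1),
          (deriv (fun s => (w s).eval (n : ℝ)) t * B.flip (natLagrangeBasis k n) (u t)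
            + (w t).eval (n : ℝ) * B.flip (natLagrangeBasis k n) (polyCurveDeriv k u t)) := by
    conv_lhs => rw [eq_sum_eval_smul_natLagrangeBasis (hwdeg t), polyCurveDeriv_eq_sum k w]
    simp only [map_sum, map_smul, smul_eq_mul, LinearMap.flip_apply, sum_add_distrib]
    ring
  rw [hexp, hval]
  exact HasDerivAt.fun_sum fun n _ =>
    (hwdiff n).hasDerivAt.mul (hasDerivAt_linearMap_polyCurveDeriv _ hudeg hudiff)

def integralMulBilin (a b : ℝ) : ℝ[X] →ₗ[ℝ] ℝ[X] →ₗ[ℝ] ℝ :=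
  LinearMap.mk₂ ℝ (fun p q => ∫ x in a..b, p.eval x * q.eval x)
    (fun p p' q => by
      simp only [eval_add, add_mul]
      exact intervalIntegral.integral_add ((p.continuous.mul q.continuous).intervalIntegrable _ _)
        ((p'.continuous.mul q.continuous).intervalIntegrable _ _))
    (fun c p q => by
      simp only [eval_smul, smul_eq_mul, mul_assoc, intervalIntegral.integral_const_mul])
    (fun p q q' => by
      simp only [eval_add, mul_add]
      exact intervalIntegral.integral_add ((p.continuous.mul q.continuous).intervalIntegrable _ _)
        ((p.continuous.mul q'.continuous).intervalIntegrable _ _))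
    (fun c p q => by
      simp only [eval_smul, smul_eq_mul, mul_left_comm, intervalIntegral.integral_const_mul])

end PolynomialCurve

section Traces

variable {Nx : ℕ} {X : ℕ → ℝ}

lemma dgMinus_succ (u : ℕ → ℝ[X]) (j : ℕ) :
    dgMinus Nx X u (j + 1) = (u j).eval (X (j + 1)) := by
  simp [dgMinus]

lemma dgPlus_of_lt (u : ℕ → ℝ[X]) {j : ℕ} (hj : j < Nx) : dgPlus Nx X u j = (u j).eval (X j) := by
  simp [dgPlus, hj.ne]

lemma dgMinus_periodic (hNx : 0 < Nx) (u : ℕ → ℝ[X]) :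
    dgMinus Nx X u Nx = dgMinus Nx X u 0 := by
  simp [dgMinus, hNx.ne']

lemma dgPlus_periodic (u : ℕ → ℝ[X]) : dgPlus Nx X u Nx = dgPlus Nx X u 0 := by
  simp [dgPlus]

lemma dgJump_periodic (hNx : 0 < Nx) (u : ℕ → ℝ[X]) : dgJump Nx X u Nx = dgJump Nx X u 0 := by
  rw [dgJump, dgJump, dgMinus_periodic hNx, dgPlus_periodic]

lemma dgAvg_periodic (hNx : 0 < Nx) (u : ℕ → ℝ[X]) : dgAvg Nx X u Nx = dgAvg Nx X u 0 := by
  rw [dgAvg, dgAvg, dgMinus_periodic hNx, dgPlus_periodic]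

lemma dgGhat_periodic (hNx : 0 < Nx) (vth : ℝ) (NH : ℕ) (Cf : ℕ → ℕ → ℝ[X]) (n : ℕ) :
    dgGhat vth NH Nx X Cf n Nx = dgGhat vth NH Nx X Cf n 0 := by
  simp only [dgGhat, dgMinus_periodic hNx, dgPlus_periodic]

lemma dgC1hat_periodic (hNx : 0 < Nx) (vth : ℝ) (NH : ℕ) (Cf : ℕ → ℕ → ℝ[X]) :
    dgC1hat vth NH Nx X Cf Nx = dgC1hat vth NH Nx X Cf 0 := by
  rw [dgC1hat, dgC1hat, dgGhat_periodic hNx]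

lemma sum_range_succ_eq_of_periodic {n : ℕ} {f : ℕ → ℝ} (h : f n = f 0) :
    ∑ j ∈ range n, f (j + 1) = ∑ j ∈ range n, f j := by
  have := sum_range_succ' f n
  rw [sum_range_succ, h] at this
  linarith

def cellsDeriv (k : ℕ) (u : ℝ → ℕ → ℝ[X]) (t : ℝ) (j : ℕ) : ℝ[X] :=
  polyCurveDeriv k (fun s => u s j) t

variable {k : ℕ} {u : ℝ → ℕ → ℝ[X]} {t : ℝ}

lemma hasDerivAt_dgMinus (hdeg : ∀ s j, (u s j).natDegree ≤ k)
    (hdiff : ∀ j x, DifferentiableAt ℝ (fun s => (u s j).eval x) t) (i : ℕ) :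
    HasDerivAt (fun s => dgMinus Nx X (u s) i) (dgMinus Nx X (cellsDeriv k u t) i) t := by
  unfold dgMinus
  split_ifs <;> exact hasDerivAt_eval_polyCurveDeriv (fun s => hdeg s _) (hdiff _) _

lemma hasDerivAt_dgPlus (hdeg : ∀ s j, (u s j).natDegree ≤ k)
    (hdiff : ∀ j x, DifferentiableAt ℝ (fun s => (u s j).eval x) t) (i : ℕ) :
    HasDerivAt (fun s => dgPlus Nx X (u s) i) (dgPlus Nx X (cellsDeriv k u t) i) t := by
  unfold dgPlus
  split_ifs <;> exact hasDerivAt_eval_polyCurveDeriv (fun s => hdeg s _) (hdiff _) _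

lemma hasDerivAt_dgJump (hdeg : ∀ s j, (u s j).natDegree ≤ k)
    (hdiff : ∀ j x, DifferentiableAt ℝ (fun s => (u s j).eval x) t) (i : ℕ) :
    HasDerivAt (fun s => dgJump Nx X (u s) i) (dgJump Nx X (cellsDeriv k u t) i) t :=
  (hasDerivAt_dgPlus hdeg hdiff i).sub (hasDerivAt_dgMinus hdeg hdiff i)

lemma hasDerivAt_dgAvg (hdeg : ∀ s j, (u s j).natDegree ≤ k)
    (hdiff : ∀ j x, DifferentiableAt ℝ (fun s => (u s j).eval x) t) (i : ℕ) :
    HasDerivAt (fun s => dgAvg Nx X (u s) i) (dgAvg Nx X (cellsDeriv k u t) i) t :=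
  ((hasDerivAt_dgPlus hdeg hdiff i).add (hasDerivAt_dgMinus hdeg hdiff i)).div_const 2

end Traces

section SchemeForms

variable {vth β : ℝ} {NH Nx : ℕ} {X : ℕ → ℝ}
variable (Cf : ℕ → ℕ → ℝ[X]) (Ef Φf : ℕ → ℝ[X])

lemma dgA_one (n j : ℕ) :
    dgA vth NH Nx X Cf n j 1 = dgGhat vth NH Nx X Cf n (j + 1) - dgGhat vth NH Nx X Cf n j := by
  simp [dgA, cellInt]

lemma dgA_zero (j : ℕ) (φ : ℝ[X]) :
    dgA vth NH Nx X Cf 0 j φ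
      = -(vth * cellInt X j fun x => (Cf 1 j).eval x * φ.derivative.eval x)
        + dgGhat vth NH Nx X Cf 0 (j + 1) * φ.eval (X (j + 1))
        - dgGhat vth NH Nx X Cf 0 j * φ.eval (X j) := by
  simp only [dgA, dgG, cellInt, CharP.cast_eq_zero, zero_add, Real.sqrt_one, one_smul,
    Real.sqrt_zero, zero_smul, add_zero, eval_smul, smul_eq_mul, mul_assoc,
    intervalIntegral.integral_const_mul]

lemma dgB_zero (j : ℕ) (φ : ℝ[X]) : dgB vth β NH Nx X Cf Ef Φf 0 j φ = 0 := by
  simp [dgB, dgR]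

lemma dgB_two_one (j : ℕ) :
    dgB vth β NH Nx X Cf Ef Φf 2 j 1
      = -(√2 / vth) * (cellInt X j fun x => (Ef j).eval x * (Cf 1 j).eval x)
        - 1 / (√2 * vth) *
          ((dgAvg Nx X (Cf 1) j - dgC1hat vth NH Nx X Cf j) * dgJump Nx X Φf j
            + (dgAvg Nx X (Cf 1) (j + 1) - dgC1hat vth NH Nx X Cf (j + 1))
              * dgJump Nx X Φf (j + 1)) := by
  simp [dgB, dgR, dgR2]

variable {Cf Ef Φf}

lemma sum_eq_zero_of_dgScheme_zero (hNx : 0 < Nx) {d : ℕ → ℝ}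
    (hd : ∀ j < Nx, d j + dgA vth NH Nx X Cf 0 j 1 + dgB vth β NH Nx X Cf Ef Φf 0 j 1 = 0) :
    ∑ j ∈ range Nx, d j = 0 := by
  have hd' : ∀ j ∈ range Nx,
      d j = dgGhat vth NH Nx X Cf 0 j - dgGhat vth NH Nx X Cf 0 (j + 1) := fun j hj => by
    have := hd j (mem_range.mp hj)
    rw [dgA_one, dgB_zero] at this
    linarith
  rw [sum_congr rfl hd', sum_sub_distrib,
    sum_range_succ_eq_of_periodic (dgGhat_periodic hNx vth NH Cf 0), sub_self]

lemma sum_eq_of_dgScheme_two (hNx : 0 < Nx) {d : ℕ → ℝ}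
    (hd : ∀ j < Nx, d j + dgA vth NH Nx X Cf 2 j 1 + dgB vth β NH Nx X Cf Ef Φf 2 j 1 = 0) :
    ∑ j ∈ range Nx, d j
      = √2 / vth * ((∑ j ∈ range Nx, cellInt X j fun x => (Ef j).eval x * (Cf 1 j).eval x)
        + ∑ i ∈ range Nx,
          (dgAvg Nx X (Cf 1) i - dgC1hat vth NH Nx X Cf i) * dgJump Nx X Φf i) := by
  set r : ℕ → ℝ := fun i =>
    (dgAvg Nx X (Cf 1) i - dgC1hat vth NH Nx X Cf i) * dgJump Nx X Φf i
  set g : ℕ → ℝ := dgGhat vth NH Nx X Cf 2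
  have hd' : ∀ j ∈ range Nx, d j = (g j - g (j + 1))
      + √2 / vth * (cellInt X j fun x => (Ef j).eval x * (Cf 1 j).eval x)
      + 1 / (√2 * vth) * (r j + r (j + 1)) := fun j hj => by
    have := hd j (mem_range.mp hj)
    rw [dgA_one, dgB_two_one] at this
    linarith
  have hr : ∑ j ∈ range Nx, r (j + 1) = ∑ j ∈ range Nx, r j :=
    sum_range_succ_eq_of_periodic (by
      simp only [r, dgAvg_periodic hNx, dgC1hat_periodic hNx, dgJump_periodic hNx])
  have hg : ∑ j ∈ range Nx, g (j + 1) = ∑ j ∈ range Nx, g j :=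
    sum_range_succ_eq_of_periodic (dgGhat_periodic hNx vth NH Cf 2)
  have hc : 1 / (√2 * vth) * 2 = √2 / vth := by
    field_simp
    rw [Real.sq_sqrt zero_le_two]
  rw [sum_congr rfl hd']
  simp only [sum_add_distrib, sum_sub_distrib, ← mul_sum, hr, hg]
  linear_combination (∑ i ∈ range Nx, r i) * hc

end SchemeForms

section CellIntegral

variable (X : ℕ → ℝ) (j : ℕ)

lemma cellInt_mul_derivative (p q : ℝ[X]) :
    (cellInt X j fun x => p.eval x * q.derivative.eval x)
      = p.eval (X (j + 1)) * q.eval (X (j + 1)) - p.eval (X j) * q.eval (X j)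
        - cellInt X j fun x => q.eval x * p.derivative.eval x := by
  rw [cellInt, cellInt, intervalIntegral.integral_mul_deriv_eq_deriv_mul
    (fun x _ => p.hasDerivAt x) (fun x _ => q.hasDerivAt x)
    (p.derivative.continuous.intervalIntegrable _ _)
    (q.derivative.continuous.intervalIntegrable _ _)]
  congr 1
  exact intervalIntegral.integral_congr fun x _ => mul_comm _ _

lemma cellInt_affine_mul (a b : ℝ) (p q : ℝ[X]) :
    (cellInt X j fun x => (a * p.eval x - b) * q.eval x)
      = a * (cellInt X j fun x => p.eval x * q.eval x) - b * cellInt X j fun x => q.eval x := by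
  simp only [cellInt, sub_mul, mul_assoc]
  rw [intervalIntegral.integral_sub (Continuous.intervalIntegrable (by fun_prop) _ _)
      (Continuous.intervalIntegrable (by fun_prop) _ _),
    intervalIntegral.integral_const_mul, intervalIntegral.integral_const_mul]

variable {k : ℕ} {u w : ℝ → ℝ[X]} {t : ℝ}

lemma hasDerivAt_cellInt_mul (hudeg : ∀ s, (u s).natDegree ≤ k)
    (hudiff : ∀ x, DifferentiableAt ℝ (fun s => (u s).eval x) t)
    (hwdeg : ∀ s, (w s).natDegree ≤ k)
    (hwdiff : ∀ x, DifferentiableAt ℝ (fun s => (w s).eval x) t) :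
    HasDerivAt (fun s => cellInt X j fun x => (u s).eval x * (w s).eval x)
      ((cellInt X j fun x => (polyCurveDeriv k u t).eval x * (w t).eval x)
        + cellInt X j fun x => (u t).eval x * (polyCurveDeriv k w t).eval x) t :=
  hasDerivAt_bilin_polyCurveDeriv (integralMulBilin (X j) (X (j + 1))) hudeg hudiff hwdeg hwdiff

lemma hasDerivAt_cellInt_mul_const (q : ℝ[X]) (hudeg : ∀ s, (u s).natDegree ≤ k)
    (hudiff : ∀ x, DifferentiableAt ℝ (fun s => (u s).eval x) t) :
    HasDerivAt (fun s => cellInt X j fun x => (u s).eval x * q.eval x)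
      (cellInt X j fun x => (polyCurveDeriv k u t).eval x * q.eval x) t :=
  hasDerivAt_linearMap_polyCurveDeriv ((integralMulBilin (X j) (X (j + 1))).flip q) hudeg hudiff

end CellIntegral

section Poisson

variable {vth ρ0 β : ℝ} {k Nx : ℕ} {X : ℕ → ℝ}

lemma dgPoisson.cellInt_mul_eq {C0f Ef Φf : ℕ → ℝ[X]}
    (hP : dgPoisson vth ρ0 β k Nx X C0f Ef Φf) {j : ℕ} (hj : j < Nx) {ψ : ℝ[X]}
    (hψ : ψ.natDegree ≤ k) :
    (cellInt X j fun x => (Ef j).eval x * ψ.eval x)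
      = -(cellInt X j fun x => ψ.eval x * (Φf j).derivative.eval x)
        - dgJump Nx X Φf (j + 1) / 2 * ψ.eval (X (j + 1))
        - dgJump Nx X Φf j / 2 * ψ.eval (X j) := by
  have h := (hP j hj ψ hψ).1
  rw [cellInt_mul_derivative, dgAvg, dgAvg, dgMinus_succ, dgPlus_of_lt _ hj] at h
  rw [dgJump, dgJump, dgMinus_succ, dgPlus_of_lt _ hj]
  linarith

variable {C0 E Φ : ℝ → ℕ → ℝ[X]} {t : ℝ}

lemma dgPoisson_timeDeriv (hP : ∀ s, dgPoisson vth ρ0 β k Nx X (C0 s) (E s) (Φ s)) {j : ℕ}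
    (hj : j < Nx) (hdegE : ∀ s j, (E s j).natDegree ≤ k)
    (hE : ∀ j x, DifferentiableAt ℝ (fun s => (E s j).eval x) t)
    (hdegΦ : ∀ s j, (Φ s j).natDegree ≤ k)
    (hΦ : ∀ j x, DifferentiableAt ℝ (fun s => (Φ s j).eval x) t)
    {ζ : ℝ[X]} (hζ : ζ.natDegree ≤ k)
    (hC0 : DifferentiableAt ℝ (fun s => cellInt X j fun x => (C0 s j).eval x * ζ.eval x) t) :
    -(cellInt X j fun x => (cellsDeriv k E t j).eval x * ζ.derivative.eval x)
      + (dgAvg Nx X (cellsDeriv k E t) (j + 1) - β * dgJump Nx X (cellsDeriv k Φ t) (j + 1))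
        * ζ.eval (X (j + 1))
      - (dgAvg Nx X (cellsDeriv k E t) j - β * dgJump Nx X (cellsDeriv k Φ t) j) * ζ.eval (X j)
    = vth * deriv (fun s => cellInt X j fun x => (C0 s j).eval x * ζ.eval x) t := by
  have hvol := hasDerivAt_cellInt_mul_const X j ζ.derivative (fun s => hdegE s j) (hE j)
  have hflux : ∀ i, HasDerivAt (fun s => dgAvg Nx X (E s) i - β * dgJump Nx X (Φ s) i)
      (dgAvg Nx X (cellsDeriv k E t) i - β * dgJump Nx X (cellsDeriv k Φ t) i) t := fun i =>
    (hasDerivAt_dgAvg hdegE hE i).fun_sub ((hasDerivAt_dgJump hdegΦ hΦ i).const_mul β)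
  refine ((hvol.fun_neg.fun_add ((hflux (j + 1)).mul_const _)).fun_sub
    ((hflux j).mul_const _)).unique ?_
  convert (hC0.hasDerivAt.const_mul vth).sub_const (ρ0 * cellInt X j fun x => ζ.eval x) using 1
  funext s
  rw [(hP s j hj ζ hζ).2, cellInt_affine_mul]

end Poisson

section FieldEnergy

variable {vth β : ℝ} {NH Nx : ℕ} {X : ℕ → ℝ}

-- The interface flux of the field-energy balance, as a function of the one-sided traces
-- `φ, e, c` of `Φ`, `∂ₜE` and `C₁` at the interface `X i`.
def dgFieldFlux (vth β : ℝ) (NH Nx : ℕ) (X : ℕ → ℝ) (Cf : ℕ → ℕ → ℝ[X])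
    (Φf dEf dΦf : ℕ → ℝ[X]) (i : ℕ) (φ e c : ℝ) : ℝ :=
  (φ - dgAvg Nx X Φf i) * (e + vth ^ 2 * c)
    - (dgAvg Nx X dEf i - β * dgJump Nx X dΦf i + vth * dgGhat vth NH Nx X Cf 0 i) * φ

lemma dgFieldFlux_dgMinus_sub_dgPlus (hv : vth ≠ 0) (Cf : ℕ → ℕ → ℝ[X])
    (Φf dEf dΦf : ℕ → ℝ[X]) (i : ℕ) :
    dgFieldFlux vth β NH Nx X Cf Φf dEf dΦf i
        (dgMinus Nx X Φf i) (dgMinus Nx X dEf i) (dgMinus Nx X (Cf 1) i)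
      - dgFieldFlux vth β NH Nx X Cf Φf dEf dΦf i
        (dgPlus Nx X Φf i) (dgPlus Nx X dEf i) (dgPlus Nx X (Cf 1) i)
    = -β * (dgJump Nx X dΦf i * dgJump Nx X Φf i)
      - vth ^ 2 * ((dgAvg Nx X (Cf 1) i - dgC1hat vth NH Nx X Cf i) * dgJump Nx X Φf i) := by
  simp only [dgFieldFlux, dgAvg, dgJump, dgC1hat]
  field_simp
  ring

lemma sum_cellInt_field_eq (hNx : 0 < Nx) (hv : vth ≠ 0) {Cf : ℕ → ℕ → ℝ[X]}
    {Ef Φf dEf dΦf : ℕ → ℝ[X]}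
    (hcell : ∀ j < Nx, (cellInt X j fun x => (Ef j).eval x * (dEf j).eval x)
        + vth ^ 2 * (cellInt X j fun x => (Ef j).eval x * (Cf 1 j).eval x)
      = dgFieldFlux vth β NH Nx X Cf Φf dEf dΦf (j + 1)
          (dgMinus Nx X Φf (j + 1)) (dgMinus Nx X dEf (j + 1)) (dgMinus Nx X (Cf 1) (j + 1))
        - dgFieldFlux vth β NH Nx X Cf Φf dEf dΦf j
          (dgPlus Nx X Φf j) (dgPlus Nx X dEf j) (dgPlus Nx X (Cf 1) j)) :
    (∑ j ∈ range Nx, cellInt X j fun x => (Ef j).eval x * (dEf j).eval x)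
        + vth ^ 2 * ∑ j ∈ range Nx, (cellInt X j fun x => (Ef j).eval x * (Cf 1 j).eval x)
      = -β * ∑ i ∈ range Nx, dgJump Nx X dΦf i * dgJump Nx X Φf i
        - vth ^ 2 * ∑ i ∈ range Nx,
          (dgAvg Nx X (Cf 1) i - dgC1hat vth NH Nx X Cf i) * dgJump Nx X Φf i := by
  set F := dgFieldFlux vth β NH Nx X Cf Φf dEf dΦf
  set U : ℕ → ℝ := fun i =>
    F i (dgMinus Nx X Φf i) (dgMinus Nx X dEf i) (dgMinus Nx X (Cf 1) i)
  set V : ℕ → ℝ := fun i => F i (dgPlus Nx X Φf i) (dgPlus Nx X dEf i) (dgPlus Nx X (Cf 1) i)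
  have hU : U Nx = U 0 := by
    simp only [U, F, dgFieldFlux, dgMinus_periodic hNx, dgAvg_periodic hNx, dgJump_periodic hNx,
      dgGhat_periodic hNx]
  rw [mul_sum, mul_sum, mul_sum, ← sum_add_distrib, ← sum_sub_distrib]
  calc _ = ∑ j ∈ range Nx, (U (j + 1) - V j) :=
        sum_congr rfl fun j hj => hcell j (mem_range.mp hj)
    _ = ∑ i ∈ range Nx, (U i - V i) := by
        rw [sum_sub_distrib, sum_sub_distrib, sum_range_succ_eq_of_periodic hU]
    _ = _ := sum_congr rfl fun i _ => dgFieldFlux_dgMinus_sub_dgPlus hv Cf Φf dEf dΦf i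

variable {ρ0 : ℝ} {k : ℕ} {C : ℕ → ℝ → ℕ → ℝ[X]} {E Φ : ℝ → ℕ → ℝ[X]} {t : ℝ}

lemma cellInt_field_eq_dgFieldFlux_sub
    (hP : ∀ s, dgPoisson vth ρ0 β k Nx X (C 0 s) (E s) (Φ s)) {j : ℕ} (hj : j < Nx)
    (hdegE : ∀ s j, (E s j).natDegree ≤ k)
    (hE : ∀ j x, DifferentiableAt ℝ (fun s => (E s j).eval x) t)
    (hdegΦ : ∀ s j, (Φ s j).natDegree ≤ k)
    (hΦ : ∀ j x, DifferentiableAt ℝ (fun s => (Φ s j).eval x) t)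
    (hdegC₁ : (C 1 t j).natDegree ≤ k)
    (hC₀ : DifferentiableAt ℝ
      (fun s => cellInt X j fun x => (C 0 s j).eval x * (Φ t j).eval x) t)
    (hs : deriv (fun s => cellInt X j fun x => (C 0 s j).eval x * (Φ t j).eval x) t
        + dgA vth NH Nx X (fun m i => C m t i) 0 j (Φ t j)
        + dgB vth β NH Nx X (fun m i => C m t i) (E t) (Φ t) 0 j (Φ t j) = 0) :
    (cellInt X j fun x => (E t j).eval x * (cellsDeriv k E t j).eval x)
        + vth ^ 2 * (cellInt X j fun x => (E t j).eval x * (C 1 t j).eval x)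
      = dgFieldFlux vth β NH Nx X (fun m i => C m t i) (Φ t) (cellsDeriv k E t)
          (cellsDeriv k Φ t) (j + 1) (dgMinus Nx X (Φ t) (j + 1))
          (dgMinus Nx X (cellsDeriv k E t) (j + 1)) (dgMinus Nx X (C 1 t) (j + 1))
        - dgFieldFlux vth β NH Nx X (fun m i => C m t i) (Φ t) (cellsDeriv k E t)
          (cellsDeriv k Φ t) j (dgPlus Nx X (Φ t) j) (dgPlus Nx X (cellsDeriv k E t) j)
          (dgPlus Nx X (C 1 t) j) := by
  have hEdE := (hP t).cellInt_mul_eq (ψ := cellsDeriv k E t j) hj (natDegree_polyCurveDeriv_le ..)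
  have hEC₁ := (hP t).cellInt_mul_eq hj hdegC₁
  have hdt := dgPoisson_timeDeriv hP hj hdegE hE hdegΦ hΦ (hdegΦ t j) hC₀
  rw [dgA_zero, dgB_zero] at hs
  simp only [dgFieldFlux, dgAvg, dgJump, dgMinus_succ, dgPlus_of_lt _ hj] at hEdE hEC₁ hdt ⊢
  linear_combination hEdE + vth ^ 2 * hEC₁ + hdt + vth * hs

end FieldEnergy

section Energy

variable {vth β : ℝ} {Nx : ℕ} {X : ℕ → ℝ}

lemma dgEnergy_eq (Cf : ℕ → ℕ → ℝ[X]) (Ef Φf : ℕ → ℝ[X]) :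
    dgEnergy vth β Nx X Cf Ef Φf
      = vth ^ 3 / 2 * (√2 * dgTotInt Nx X (Cf 2) + dgTotInt Nx X (Cf 0))
        + 1 / 2 * (∑ j ∈ range Nx, cellInt X j fun x => (Ef j).eval x * (Ef j).eval x)
        + β / 2 * ∑ j ∈ range Nx, dgJump Nx X Φf j ^ 2 := by
  have hcell : ∀ j, (cellInt X j fun x =>
        vth ^ 3 * (√2 * (Cf 2 j).eval x + (Cf 0 j).eval x) + (Ef j).eval x ^ 2)
      = vth ^ 3 * (√2 * (cellInt X j fun x => (Cf 2 j).eval x)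
          + cellInt X j fun x => (Cf 0 j).eval x)
        + cellInt X j fun x => (Ef j).eval x * (Ef j).eval x := by
    intro j
    simp only [cellInt, sq]
    rw [intervalIntegral.integral_add, intervalIntegral.integral_const_mul,
      intervalIntegral.integral_add, intervalIntegral.integral_const_mul] <;>
    exact Continuous.intervalIntegrable (by fun_prop) _ _
  simp only [dgEnergy, dgTotInt, hcell, sum_add_distrib, ← mul_sum]
  ring

variable {k : ℕ} {C : ℕ → ℝ → ℕ → ℝ[X]} {E Φ : ℝ → ℕ → ℝ[X]} {t : ℝ}

lemma hasDerivAt_dgEnergy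
    (hC : ∀ n j, DifferentiableAt ℝ (fun s => cellInt X j fun x => (C n s j).eval x) t)
    (hdegE : ∀ s j, (E s j).natDegree ≤ k)
    (hE : ∀ j x, DifferentiableAt ℝ (fun s => (E s j).eval x) t)
    (hdegΦ : ∀ s j, (Φ s j).natDegree ≤ k)
    (hΦ : ∀ j x, DifferentiableAt ℝ (fun s => (Φ s j).eval x) t) :
    HasDerivAt (fun s => dgEnergy vth β Nx X (fun m i => C m s i) (E s) (Φ s))
      (vth ^ 3 / 2 *
          (√2 * ∑ j ∈ range Nx, deriv (fun s => cellInt X j fun x => (C 2 s j).eval x) t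
            + ∑ j ∈ range Nx, deriv (fun s => cellInt X j fun x => (C 0 s j).eval x) t)
        + (∑ j ∈ range Nx, cellInt X j fun x => (E t j).eval x * (cellsDeriv k E t j).eval x)
        + β * ∑ j ∈ range Nx, dgJump Nx X (cellsDeriv k Φ t) j * dgJump Nx X (Φ t) j) t := by
  have hmoment : ∀ n, HasDerivAt (fun s => dgTotInt Nx X (C n s))
      (∑ j ∈ range Nx, deriv (fun s => cellInt X j fun x => (C n s j).eval x) t) t := fun n =>
    HasDerivAt.fun_sum fun j _ => (hC n j).hasDerivAt
  have hfield : HasDerivAt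
      (fun s => ∑ j ∈ range Nx, cellInt X j fun x => (E s j).eval x * (E s j).eval x)
      (∑ j ∈ range Nx, ((cellInt X j fun x => (cellsDeriv k E t j).eval x * (E t j).eval x)
        + cellInt X j fun x => (E t j).eval x * (cellsDeriv k E t j).eval x)) t :=
    HasDerivAt.fun_sum fun j _ =>
      hasDerivAt_cellInt_mul X j (fun s => hdegE s j) (hE j) (fun s => hdegE s j) (hE j)
  have hjump := HasDerivAt.fun_sum (u := range Nx) fun j _ =>
    (hasDerivAt_dgJump (Nx := Nx) (X := X) hdegΦ hΦ j).fun_pow 2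
  have hfield_eq :
      ∑ j ∈ range Nx, ((cellInt X j fun x => (cellsDeriv k E t j).eval x * (E t j).eval x)
        + cellInt X j fun x => (E t j).eval x * (cellsDeriv k E t j).eval x)
      = 2 * ∑ j ∈ range Nx, cellInt X j fun x => (E t j).eval x * (cellsDeriv k E t j).eval x := by
    rw [mul_sum]
    refine sum_congr rfl fun j _ => ?_
    rw [two_mul]
    congr 1
    exact intervalIntegral.integral_congr fun x _ => mul_comm _ _
  have hjump_eq : ∑ j ∈ range Nx,
        (2 : ℕ) * dgJump Nx X (Φ t) j ^ (2 - 1) * dgJump Nx X (cellsDeriv k Φ t) j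
      = 2 * ∑ j ∈ range Nx, dgJump Nx X (cellsDeriv k Φ t) j * dgJump Nx X (Φ t) j := by
    rw [mul_sum]
    exact sum_congr rfl fun j _ => by push_cast; ring
  simp only [dgEnergy_eq]
  refine ((((hmoment 2).const_mul √2).fun_add (hmoment 0)).const_mul (vth ^ 3 / 2)).fun_add
    (hfield.const_mul (1 / 2)) |>.fun_add (hjump.const_mul (β / 2)) |>.congr_deriv ?_
  rw [hfield_eq, hjump_eq]
  ring

end Energy

end

theorem dg_semidiscrete_energy_conservation_general
    (vth ρ0 β : ℝ) (k Nx NH : ℕ)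
    (hvth : 0 < vth) (hNx : 1 ≤ Nx) (hNH : 3 ≤ NH)
    -- the partition `0 = x_{1/2} < … < x_{Nx+1/2} = L`
    (X : ℕ → ℝ)
    -- the numerical solution, cell by cell
    (C : ℕ → ℝ → ℕ → Polynomial ℝ) (E Φ : ℝ → ℕ → Polynomial ℝ)
    -- membership in `V_h^k`
    (hdegC : ∀ n t j, (C n t j).natDegree ≤ k)
    (hdegE : ∀ t j, (E t j).natDegree ≤ k)
    (hdegΦ : ∀ t j, (Φ t j).natDegree ≤ k)
    -- C¹ regularity in time
    (hC1 : ∀ n j (φ : Polynomial ℝ),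
      Differentiable ℝ fun t => cellInt X j fun x => (C n t j).eval x * φ.eval x)
    -- the modified semi-discrete DG scheme
    (hScheme : ∀ t : ℝ, ∀ n < NH, ∀ j < Nx, ∀ φ : Polynomial ℝ, φ.natDegree ≤ k →
      deriv (fun s => cellInt X j fun x => (C n s j).eval x * φ.eval x) t
        + dgA vth NH Nx X (fun m i => C m t i) n j φ
        + dgB vth β NH Nx X (fun m i => C m t i) (E t) (Φ t) n j φ = 0)
    -- C¹ regularity in time of the electric field and potential
    (hE1 : ∀ j x, Differentiable ℝ fun t => (E t j).eval x)
    (hΦ1 : ∀ j x, Differentiable ℝ fun t => (Φ t j).eval x)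
    -- the DG Poisson solver
    (hPoisson : ∀ t : ℝ, dgPoisson vth ρ0 β k Nx X (C 0 t) (E t) (Φ t)) :
    ∀ t : ℝ, dgEnergy vth β Nx X (fun m i => C m t i) (E t) (Φ t)
      = dgEnergy vth β Nx X (fun m i => C m 0 i) (E 0) (Φ 0) := by
  suffices hder : ∀ t, HasDerivAt
      (fun s => dgEnergy vth β Nx X (fun m i => C m s i) (E s) (Φ s)) 0 t from fun t =>
    is_const_of_deriv_eq_zero (fun s => (hder s).differentiableAt) (fun s => (hder s).deriv) t 0
  intro t
  have hmoment : ∀ n j, Differentiable ℝ fun s => cellInt X j fun x => (C n s j).eval x :=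
    fun n j => by simpa only [eval_one, mul_one] using hC1 n j 1
  have hscheme : ∀ n < NH, ∀ j < Nx,
      deriv (fun s => cellInt X j fun x => (C n s j).eval x) t
        + dgA vth NH Nx X (fun m i => C m t i) n j 1
        + dgB vth β NH Nx X (fun m i => C m t i) (E t) (Φ t) n j 1 = 0 :=
    fun n hn j hj => by simpa only [eval_one, mul_one] using hScheme t n hn j hj 1 (by simp)
  have hmass := sum_eq_zero_of_dgScheme_zero hNx (hscheme 0 (by omega))
  have hsecond := sum_eq_of_dgScheme_two hNx (hscheme 2 (by omega))
  have hfield := sum_cellInt_field_eq (Cf := fun m i => C m t i) hNx hvth.ne' fun j hj =>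
    cellInt_field_eq_dgFieldFlux_sub hPoisson hj hdegE (fun j x => hE1 j x t) hdegΦ
      (fun j x => hΦ1 j x t) (hdegC 1 t j) (hC1 0 j (Φ t j) t)
      (hScheme t 0 (by omega) j hj (Φ t j) (hdegΦ t j))
  refine (hasDerivAt_dgEnergy (fun n j => hmoment n j t) hdegE (fun j x => hE1 j x t) hdegΦ
    (fun j x => hΦ1 j x t)).congr_deriv ?_
  have hcoeff : ∀ S : ℝ, vth ^ 3 / 2 * (√2 * (√2 / vth * S)) = vth ^ 2 * S := fun S => by
    field_simp
    rw [Real.sq_sqrt zero_le_two]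
  rw [hmass, add_zero, hsecond, hcoeff]
  linear_combination hfield

/-- Conservation of the discrete total energy for the modified semi-discrete
discontinuous Galerkin scheme: `ℰ_h(t)` is constant in `t`. -/
theorem dg_semidiscrete_energy_conservation
    (L vth ρ0 β : ℝ) (k Nx NH : ℕ)
    (hL : 0 < L) (hvth : 0 < vth) (hβ : 0 < β) (hNx : 1 ≤ Nx) (hNH : 3 ≤ NH)
    -- the partition `0 = x_{1/2} < … < x_{Nx+1/2} = L`
    (X : ℕ → ℝ) (hX0 : X 0 = 0) (hXL : X Nx = L)
    (hXmono : ∀ j < Nx, X j < X (j + 1))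
    -- the numerical solution, cell by cell
    (C : ℕ → ℝ → ℕ → Polynomial ℝ) (E Φ : ℝ → ℕ → Polynomial ℝ)
    -- membership in `V_h^k`
    (hdegC : ∀ n t j, (C n t j).natDegree ≤ k)
    (hdegE : ∀ t j, (E t j).natDegree ≤ k)
    (hdegΦ : ∀ t j, (Φ t j).natDegree ≤ k)
    -- truncation convention `C_{N_H} = 0` (and beyond)
    (hCtop : ∀ n, NH ≤ n → ∀ t j, C n t j = 0)
    -- C¹ regularity in time
    (hC1 : ∀ n j (φ : Polynomial ℝ),
      Differentiable ℝ fun t => cellInt X j fun x => (C n t j).eval x * φ.eval x)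
    -- the modified semi-discrete DG scheme
    (hScheme : ∀ t : ℝ, ∀ n < NH, ∀ j < Nx, ∀ φ : Polynomial ℝ, φ.natDegree ≤ k →
      deriv (fun s => cellInt X j fun x => (C n s j).eval x * φ.eval x) t
        + dgA vth NH Nx X (fun m i => C m t i) n j φ
        + dgB vth β NH Nx X (fun m i => C m t i) (E t) (Φ t) n j φ = 0)
    -- C¹ regularity in time of the electric field and potential
    (hE1 : ∀ j x, Differentiable ℝ fun t => (E t j).eval x)
    (hΦ1 : ∀ j x, Differentiable ℝ fun t => (Φ t j).eval x)
    -- the DG Poisson solver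
    (hPoisson : ∀ t : ℝ, dgPoisson vth ρ0 β k Nx X (C 0 t) (E t) (Φ t)) :
    ∀ t : ℝ, dgEnergy vth β Nx X (fun m i => C m t i) (E t) (Φ t)
      = dgEnergy vth β Nx X (fun m i => C m 0 i) (E 0) (Φ 0) :=
  dg_semidiscrete_energy_conservation_general vth ρ0 β k Nx NH hvth hNx hNH X C E Φ hdegC hdegE
    hdegΦ hC1 hScheme hE1 hΦ1 hPoisson
end
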